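/- Let N ≥ 1 and n ≥ 1 be integers, let x₁, x₂ be rational numbers and set x = x₁ + x₂. Then ∑_{i₁,i₂ ≥ 0, i₁+i₂ = n} (n!/(i₁! i₂!)) B_{N,i₁}(x₁) B_{N,i₂}(x₂) = (1/N)(N − n) B_{N,n}(x) + (n/N)(x − 1) B_{N,n−1}(x). -/

import Mathlib

/-!
Write `βᵧ(t) = ∑ₙ B_{N,n}(y) tⁿ / n!` and `D(t) = e^t - T_{N-1}(t)`, so that
`βᵧ D = tᴺ e^{yt} / N!`. Then `β_{x₁} β_{x₂} D² = (tᴺ / N!) β_x D` with `x = x₁ + x₂`, while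
differentiating `β_x D = tᴺ e^{xt} / N!` and using `t D' = t D + N tᴺ / N!` gives
`N tᴺ β_x / N! = ((N + (x - 1) t) β_x - t β_x') D`. Cancelling `D²` leaves
`N β_{x₁} β_{x₂} = N β_x + (x - 1) t β_x - t β_x'`, whose `n`-th coefficient, multiplied by
`n! / N`, is the identity.
-/

open Finset PowerSeries
open scoped Nat

namespace PowerSeries

variable {R : Type*} [CommRing R]

theorem coeff_X_mul_derivative (f : R⟦X⟧) (n : ℕ) :
    coeff n (X * d⁄dX R f) = n * coeff n f := by
  cases n with
  | zero => simp
  | succ n => rw [coeff_succ_X_mul, coeff_derivative]; push_cast; ring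

theorem X_mul_derivative_X_pow (N : ℕ) : X * d⁄dX R (X ^ N : R⟦X⟧) = C (N : R) * X ^ N := by
  ext n
  rw [coeff_X_mul_derivative, coeff_C_mul, coeff_X_pow]
  split_ifs with h
  · rw [h]
  · simp

theorem derivative_rescale (a : R) (f : R⟦X⟧) :
    d⁄dX R (rescale a f) = C a * rescale a (d⁄dX R f) := by
  ext n
  simp only [coeff_derivative, coeff_C_mul, coeff_rescale]
  ring

theorem derivative_rescale_exp [Algebra ℚ R] (a : R) :
    d⁄dX R (rescale a (exp R)) = C a * rescale a (exp R) := by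
  rw [derivative_rescale, derivative_exp]

theorem C_mul_X_pow_mul_eq_of_mul_eq {β D E : R⟦X⟧} {c x : R} {N : ℕ}
    (h : β * D = C c * X ^ N * E) (hD : X * d⁄dX R D = X * D + C (N * c) * X ^ N)
    (hE : d⁄dX R E = C x * E) :
    C (N * c) * X ^ N * β = ((C (N : R) + (C x - 1) * X) * β - X * d⁄dX R β) * D := by
  have hXN := X_mul_derivative_X_pow (R := R) N
  have hderiv := congrArg (X * d⁄dX R ·) h
  simp only [Derivation.leibniz, smul_eq_mul, derivative_C, hE] at hderiv
  simp only [map_mul] at hD ⊢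
  linear_combination hderiv - β * hD + C c * E * hXN - (C (N : R) + C x * X) * h

end PowerSeries

/-- The power series `e^t - T_{N-1}(t)`. -/
noncomputable def expTail (N : ℕ) : ℚ⟦X⟧ := mk fun j => if N ≤ j then (j ! : ℚ)⁻¹ else 0

theorem expTail_ne_zero (N : ℕ) : expTail N ≠ 0 := by
  intro h
  have := congrArg (coeff N) h
  simp [expTail, Nat.factorial_ne_zero] at this

theorem X_mul_derivative_expTail (N : ℕ) :
    X * d⁄dX ℚ (expTail N) = X * expTail N + C (N * (N ! : ℚ)⁻¹) * X ^ N := by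
  ext j
  rw [coeff_X_mul_derivative, map_add, coeff_C_mul, coeff_X_pow]
  cases j with
  | zero => cases N <;> simp [expTail]
  | succ j =>
    simp only [expTail, coeff_succ_X_mul, coeff_mk]
    rcases lt_trichotomy N (j + 1) with h | rfl | h
    · rw [if_pos h.le, if_pos (by omega), if_neg h.ne']
      push_cast [Nat.factorial_succ]
      field_simp
      ring
    · simp
    · rw [if_neg (by omega), if_neg (by omega), if_neg h.ne]
      simp

noncomputable def egfEval (B : ℕ → Polynomial ℚ) (y : ℚ) : ℚ⟦X⟧ := mk fun k => (B k).eval y / k !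

/-- The coefficient form of `t^N e^{yt} / N! = (e^t - T_{N-1}(t)) ∑ₙ Bₙ(y) tⁿ / n!`. -/
def IsHypergeometricBernoulli (N : ℕ) (B : ℕ → Polynomial ℚ) : Prop :=
  ∀ m : ℕ, ∑ k ∈ Finset.range (m + 1),
      (if N ≤ m - k then ((k.factorial * (m - k).factorial : ℚ))⁻¹ • B k else 0)
    = if N ≤ m then ((N.factorial * (m - N).factorial : ℚ))⁻¹ • (Polynomial.X ^ (m - N))
      else 0

theorem IsHypergeometricBernoulli.egfEval_mul_expTail {N : ℕ} {B : ℕ → Polynomial ℚ}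
    (hB : IsHypergeometricBernoulli N B) (y : ℚ) :
    egfEval B y * expTail N = C (N ! : ℚ)⁻¹ * X ^ N * rescale y (exp ℚ) := by
  ext m
  have h := congrArg (Polynomial.eval y) (hB m)
  simp only [Polynomial.eval_finsetSum, apply_ite (Polynomial.eval y), Polynomial.eval_smul,
    Polynomial.eval_zero, Polynomial.eval_pow, Polynomial.eval_X, smul_eq_mul] at h
  rw [mul_assoc, coeff_C_mul, coeff_X_pow_mul', coeff_mul,
    Finset.Nat.sum_antidiagonal_eq_sum_range_succ_mk]
  simp only [egfEval, expTail, coeff_mk, coeff_rescale, coeff_exp, eq_ratCast, Rat.cast_id]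
  refine Eq.trans (Finset.sum_congr rfl fun k _ => ?_) (h.trans ?_)
  · split_ifs
    · field_simp
    · simp
  · split_ifs
    · field_simp
    · simp

theorem IsHypergeometricBernoulli.egfEval_mul_egfEval {N : ℕ} {B : ℕ → Polynomial ℚ}
    (hB : IsHypergeometricBernoulli N B) (x₁ x₂ : ℚ) :
    C (N : ℚ) * (egfEval B x₁ * egfEval B x₂)
      = C (N : ℚ) * egfEval B (x₁ + x₂) + C (x₁ + x₂ - 1) * (X * egfEval B (x₁ + x₂))
        - X * d⁄dX ℚ (egfEval B (x₁ + x₂)) := by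
  have hode := C_mul_X_pow_mul_eq_of_mul_eq (hB.egfEval_mul_expTail (x₁ + x₂))
    (X_mul_derivative_expTail N) (derivative_rescale_exp (x₁ + x₂))
  have hexp := exp_mul_exp_eq_exp_add x₁ x₂
  have hD := expTail_ne_zero N
  apply mul_right_cancel₀ (mul_ne_zero hD hD)
  rw [map_mul] at hode
  rw [map_sub, map_one]
  linear_combination (C (N : ℚ) * egfEval B x₂ * expTail N) * hB.egfEval_mul_expTail x₁
    + (C (N : ℚ) * C (N ! : ℚ)⁻¹ * X ^ N * rescale x₁ (exp ℚ)) * hB.egfEval_mul_expTail x₂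
    + (C (N : ℚ) * (C (N ! : ℚ)⁻¹ * X ^ N) ^ 2) * hexp
    - (C (N : ℚ) * C (N ! : ℚ)⁻¹ * X ^ N) * hB.egfEval_mul_expTail (x₁ + x₂)
    + expTail N * hode

theorem factorial_mul_coeff_egfEval_mul_egfEval (B : ℕ → Polynomial ℚ) (x₁ x₂ : ℚ) (n : ℕ) :
    n ! * coeff n (egfEval B x₁ * egfEval B x₂)
      = ∑ p ∈ antidiagonal n, (n ! : ℚ) / (p.1 ! * p.2 !) * (B p.1).eval x₁ * (B p.2).eval x₂ := by
  rw [coeff_mul, mul_sum]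
  refine sum_congr rfl fun p _ => ?_
  simp only [egfEval, coeff_mk]
  ring

theorem factorial_mul_coeff_egfEval (B : ℕ → Polynomial ℚ) (y : ℚ) (n : ℕ) :
    n ! * coeff n (egfEval B y) = (B n).eval y := by
  rw [egfEval, coeff_mk]
  field_simp

theorem factorial_mul_coeff_X_mul_egfEval (B : ℕ → Polynomial ℚ) (y : ℚ) (n : ℕ) :
    n ! * coeff n (X * egfEval B y) = n * (B (n - 1)).eval y := by
  cases n with
  | zero => simp
  | succ n =>
    rw [coeff_succ_X_mul, egfEval, coeff_mk, Nat.factorial_succ]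
    push_cast
    field_simp

theorem sum_products_two_hypergeometric_bernoulli_polynomials_general
    (N n : ℕ) (hN : 1 ≤ N) (x₁ x₂ : ℚ)
    (B : ℕ → Polynomial ℚ)
    (hB : ∀ m : ℕ, ∑ k ∈ Finset.range (m + 1),
        (if N ≤ m - k then ((k.factorial * (m - k).factorial : ℚ))⁻¹ • B k else 0)
      = if N ≤ m then ((N.factorial * (m - N).factorial : ℚ))⁻¹ • (Polynomial.X ^ (m - N))
        else 0) :
    ∑ p ∈ Finset.HasAntidiagonal.antidiagonal n,
        ((n.factorial : ℚ) / ((p.1.factorial : ℚ) * (p.2.factorial : ℚ)))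
          * (B p.1).eval x₁ * (B p.2).eval x₂
      = (1 / (N : ℚ)) * ((N : ℚ) - (n : ℚ)) * (B n).eval (x₁ + x₂)
        + ((n : ℚ) / (N : ℚ)) * ((x₁ + x₂) - 1) * (B (n - 1)).eval (x₁ + x₂) := by
  have hN0 : (N : ℚ) ≠ 0 := Nat.cast_ne_zero.mpr (by omega)
  have key := congrArg (fun f => (n ! : ℚ) * coeff n f)
    (IsHypergeometricBernoulli.egfEval_mul_egfEval hB x₁ x₂)
  simp only [map_sub (coeff n), map_add (coeff n), coeff_C_mul, coeff_X_mul_derivative] at key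
  rw [← factorial_mul_coeff_egfEval_mul_egfEval]
  field_simp
  linear_combination key + (N - n) * factorial_mul_coeff_egfEval B (x₁ + x₂) n
    + (x₁ + x₂ - 1) * factorial_mul_coeff_X_mul_egfEval B (x₁ + x₂) n

/-- Sums of products of two hypergeometric Bernoulli polynomials:
`∑_{i₁+i₂=n} (n!/(i₁!i₂!)) B_{N,i₁}(x₁) B_{N,i₂}(x₂)
  = (1/N)(N-n) B_{N,n}(x) + (n/N)(x-1) B_{N,n-1}(x)` with `x = x₁ + x₂` and `n ≥ 1`.
Here `B n` is the hypergeometric Bernoulli polynomial `B_{N,n}(x)`, characterized by the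
coefficient relations coming from its generating function. -/
theorem sum_products_two_hypergeometric_bernoulli_polynomials
    (N n : ℕ) (hN : 1 ≤ N) (hn : 1 ≤ n) (x₁ x₂ : ℚ)
    (B : ℕ → Polynomial ℚ)
    (hB : ∀ m : ℕ, ∑ k ∈ Finset.range (m + 1),
        (if N ≤ m - k then ((k.factorial * (m - k).factorial : ℚ))⁻¹ • B k else 0)
      = if N ≤ m then ((N.factorial * (m - N).factorial : ℚ))⁻¹ • (Polynomial.X ^ (m - N))
        else 0) :
    ∑ p ∈ Finset.HasAntidiagonal.antidiagonal n,
        ((n.factorial : ℚ) / ((p.1.factorial : ℚ) * (p.2.factorial : ℚ)))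
          * (B p.1).eval x₁ * (B p.2).eval x₂
      = (1 / (N : ℚ)) * ((N : ℚ) - (n : ℚ)) * (B n).eval (x₁ + x₂)
        + ((n : ℚ) / (N : ℚ)) * ((x₁ + x₂) - 1) * (B (n - 1)).eval (x₁ + x₂) :=
  sum_products_two_hypergeometric_bernoulli_polynomials_general N n hN x₁ x₂ B hB
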